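/- Let d ≥ 1 and set A = 2^{d/2}. There is a constant C (depending only on A, hence on d) such that for every sequence (a_k)_{k≥0} of nonnegative real numbers one has Σ_{k≥0} A^k·a_k ≤ C·(Σ_{k≥0} a_k²)^{1/4}·(Σ_{k≥0} A^{4k}·a_k²)^{1/4} (where the inequality is trivially true if either sum on the right diverges). -/

import Mathlib

/-!
Write `B = 2^{d/2}`, `S = ∑ b_k²` and `T = ∑ B^{4k} b_k²`, and split `∑ B^k b_k` at an index `K`.
By Cauchy–Schwarz the head `k ≤ K` is at most a constant times `B^K S^{1/2}`, and the tail,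
written as `∑ B^{-k} (B^{2k} b_k)`, at most a constant times `B^{-(K+1)} T^{1/2}`; both constants
are the geometric series `∑ B^{-2j}`. Choosing `K` with `B^K S^{1/4} ≤ T^{1/4} ≤ B^{K+1} S^{1/4}`
bounds each term by the constant times `(S T)^{1/4}`.
-/

open Finset ENNReal

namespace ENNReal

theorem inner_le_L2_mul_L2 {ι : Type*} (s : Finset ι) (f g : ι → ℝ≥0∞) :
    ∑ i ∈ s, f i * g i ≤ (∑ i ∈ s, f i ^ 2) ^ (1 / 2 : ℝ) * (∑ i ∈ s, g i ^ 2) ^ (1 / 2 : ℝ) := by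
  simpa only [rpow_two] using inner_le_Lp_mul_Lq s f g .two_two

theorem inner_le_L2_mul_L2_tsum {ι : Type*} (f g : ι → ℝ≥0∞) :
    ∑' i, f i * g i ≤ (∑' i, f i ^ 2) ^ (1 / 2 : ℝ) * (∑' i, g i ^ 2) ^ (1 / 2 : ℝ) := by
  rw [ENNReal.tsum_eq_iSup_sum]
  refine iSup_le fun s => (inner_le_L2_mul_L2 s f g).trans ?_
  gcongr <;> exact ENNReal.sum_le_tsum s

theorem sum_range_succ_geometric_le {r : ℝ≥0∞} (hr₀ : r ≠ 0) (hr : r ≠ ⊤) (n : ℕ) :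
    ∑ k ∈ range (n + 1), r ^ k ≤ r ^ n * (1 - r⁻¹)⁻¹ := by
  rw [← sum_range_reflect, ← tsum_geometric, ← ENNReal.tsum_mul_left]
  refine (ENNReal.sum_le_tsum _).trans' (sum_le_sum fun k hk => le_of_eq ?_)
  have hkn : k ≤ n := Nat.lt_succ_iff.1 (mem_range.1 hk)
  calc r ^ (n + 1 - 1 - k) = r ^ (n - k) * (r ^ k * r⁻¹ ^ k) := by
        rw [← mul_pow, ENNReal.mul_inv_cancel hr₀ hr, one_pow, mul_one, Nat.add_sub_cancel]
    _ = r ^ n * r⁻¹ ^ k := by rw [← mul_assoc, ← pow_add, Nat.sub_add_cancel hkn]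

theorem tsum_geometric_add (r : ℝ≥0∞) (n : ℕ) : ∑' k, r ^ (k + n) = r ^ n * (1 - r)⁻¹ := by
  simp only [pow_add, ENNReal.tsum_mul_right, tsum_geometric]
  exact mul_comm _ _

theorem sq_rpow_one_half (x : ℝ≥0∞) : (x ^ 2) ^ (1 / 2 : ℝ) = x := by
  simpa using pow_rpow_inv_natCast two_ne_zero x

theorem rpow_one_fourth_sq (x : ℝ≥0∞) : (x ^ (1 / 4 : ℝ)) ^ 2 = x ^ (1 / 2 : ℝ) := by
  rw [← rpow_natCast, ← rpow_mul]; norm_num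

end ENNReal

section

variable {B : ℝ≥0∞}

theorem inv_one_sub_inv_sq_ne_top (hB : 1 < B) : (1 - B⁻¹ ^ 2)⁻¹ ≠ ⊤ :=
  ENNReal.inv_ne_top.2 (tsub_pos_of_lt (pow_lt_one₀ zero_le (ENNReal.inv_lt_one.2 hB)
    two_ne_zero)).ne'

theorem tsum_pow_mul_le_head_add_tail (hB₀ : B ≠ 0) (hB : B ≠ ⊤) (b : ℕ → ℝ≥0∞) (K : ℕ) :
    ∑' k, B ^ k * b k ≤ (1 - B⁻¹ ^ 2)⁻¹ ^ (1 / 2 : ℝ) *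
      (B ^ K * (∑' k, b k ^ 2) ^ (1 / 2 : ℝ) +
        B⁻¹ ^ (K + 1) * (∑' k, (B ^ (2 * k) * b k) ^ 2) ^ (1 / 2 : ℝ)) := by
  set c := (1 - B⁻¹ ^ 2)⁻¹
  rw [← ENNReal.summable.sum_add_tsum_nat_add' (k := K + 1), mul_add]
  gcongr ?_ + ?_
  · have hgeom : ∑ k ∈ range (K + 1), (B ^ k) ^ 2 ≤ (B ^ K) ^ 2 * c := by
      have h := sum_range_succ_geometric_le (pow_ne_zero 2 hB₀) (pow_ne_top hB) K
      simp only [← pow_mul, ENNReal.inv_pow] at h ⊢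
      simpa only [mul_comm] using h
    calc ∑ k ∈ range (K + 1), B ^ k * b k
        ≤ (∑ k ∈ range (K + 1), (B ^ k) ^ 2) ^ (1 / 2 : ℝ) *
            (∑ k ∈ range (K + 1), b k ^ 2) ^ (1 / 2 : ℝ) := inner_le_L2_mul_L2 _ _ _
      _ ≤ ((B ^ K) ^ 2 * c) ^ (1 / 2 : ℝ) * (∑' k, b k ^ 2) ^ (1 / 2 : ℝ) := by
        gcongr
        exact ENNReal.sum_le_tsum _
      _ = c ^ (1 / 2 : ℝ) * (B ^ K * (∑' k, b k ^ 2) ^ (1 / 2 : ℝ)) := by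
        rw [mul_rpow_of_nonneg _ _ (by norm_num), sq_rpow_one_half]; ring
  · have hpow : ∀ n, B ^ n = B⁻¹ ^ n * B ^ (2 * n) := fun n => by
      rw [two_mul, pow_add, ← mul_assoc, ← mul_pow, ENNReal.inv_mul_cancel hB₀ hB, one_pow,
        one_mul]
    have hgeom : ∑' j, (B⁻¹ ^ (j + (K + 1))) ^ 2 = (B⁻¹ ^ (K + 1)) ^ 2 * c := by
      have h := tsum_geometric_add (B⁻¹ ^ 2) (K + 1)
      simp only [← pow_mul] at h ⊢
      simpa only [mul_comm] using h
    calc ∑' j, B ^ (j + (K + 1)) * b (j + (K + 1))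
        = ∑' j, B⁻¹ ^ (j + (K + 1)) * (B ^ (2 * (j + (K + 1))) * b (j + (K + 1))) := by
          exact tsum_congr fun j => by rw [← mul_assoc, ← hpow]
      _ ≤ (∑' j, (B⁻¹ ^ (j + (K + 1))) ^ 2) ^ (1 / 2 : ℝ) *
            (∑' j, (B ^ (2 * (j + (K + 1))) * b (j + (K + 1))) ^ 2) ^ (1 / 2 : ℝ) :=
          inner_le_L2_mul_L2_tsum _ _
      _ ≤ ((B⁻¹ ^ (K + 1)) ^ 2 * c) ^ (1 / 2 : ℝ) *
            (∑' k, (B ^ (2 * k) * b k) ^ 2) ^ (1 / 2 : ℝ) := by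
          rw [hgeom]
          exact mul_le_mul_right (rpow_le_rpow (tsum_comp_le_tsum_of_injective
            (add_left_injective _) (fun k => (B ^ (2 * k) * b k) ^ 2)) (by norm_num)) _
      _ = c ^ (1 / 2 : ℝ) * (B⁻¹ ^ (K + 1) * (∑' k, (B ^ (2 * k) * b k) ^ 2) ^ (1 / 2 : ℝ)) := by
        rw [mul_rpow_of_nonneg _ _ (by norm_num), sq_rpow_one_half]; ring

theorem exists_pow_mul_le_le {u v : ℝ≥0∞} (hB : 1 < B) (hu : u ≠ 0) (huv : u ≤ v)
    (hv : v ≠ ⊤) : ∃ K : ℕ, B ^ K * u ≤ v ∧ v ≤ B ^ (K + 1) * u := by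
  obtain ⟨n, hn⟩ : ∃ n, v < B ^ n * u := by
    have hlim := ENNReal.Tendsto.mul_const (b := u)
      (ENNReal.tendsto_pow_atTop_nhds_top_iff.2 hB) (.inl top_ne_zero)
    rw [top_mul hu] at hlim
    exact (hlim.eventually (lt_mem_nhds hv.lt_top)).exists
  by_contra! h
  have hle : ∀ K, B ^ K * u ≤ v := fun K => Nat.rec (by simpa) (fun K ih => (h K ih).le) K
  exact (hle n).not_gt hn

theorem tsum_pow_mul_le (hB : 1 < B) (hB_top : B ≠ ⊤) (b : ℕ → ℝ≥0∞) :
    ∑' k, B ^ k * b k ≤ 2 * (1 - B⁻¹ ^ 2)⁻¹ ^ (1 / 2 : ℝ) *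
      (∑' k, b k ^ 2) ^ (1 / 4 : ℝ) * (∑' k, (B ^ (2 * k) * b k) ^ 2) ^ (1 / 4 : ℝ) := by
  set S := ∑' k, b k ^ 2
  set T := ∑' k, (B ^ (2 * k) * b k) ^ 2
  set c := (1 - B⁻¹ ^ 2)⁻¹
  have hB₀ : B ≠ 0 := (zero_lt_one.trans hB).ne'
  rcases eq_or_ne S 0 with hS | hS
  · have hb : ∀ k, b k = 0 := fun k =>
      (pow_eq_zero_iff two_ne_zero).1 (ENNReal.tsum_eq_zero.1 hS k)
    simp [hb]
  have hc : c ≠ 0 := ENNReal.inv_ne_zero.2 (sub_ne_top one_ne_top)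
  rcases eq_or_ne T ⊤ with hT | hT
  · rw [hT, top_rpow_of_pos (by norm_num), mul_top]
    · exact le_top
    · exact mul_ne_zero (mul_ne_zero two_ne_zero (rpow_pos_of_nonneg hc.bot_lt (by norm_num)).ne')
        (rpow_pos_of_nonneg hS.bot_lt (by norm_num)).ne'
  have hST : S ≤ T := ENNReal.tsum_le_tsum fun k => by
    gcongr
    exact le_mul_of_one_le_left' (one_le_pow₀ hB.le)
  set u := S ^ (1 / 4 : ℝ)
  set v := T ^ (1 / 4 : ℝ)
  obtain ⟨K, hlow, hup⟩ := exists_pow_mul_le_le (u := u) (v := v) hB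
    (rpow_pos_of_nonneg hS.bot_lt (by norm_num)).ne' (rpow_le_rpow hST (by norm_num))
    (rpow_ne_top_of_nonneg (by norm_num) hT)
  have hhead : B ^ K * u ^ 2 ≤ u * v := by
    calc B ^ K * u ^ 2 = B ^ K * u * u := by ring
      _ ≤ v * u := by gcongr
      _ = u * v := mul_comm _ _
  have htail : B⁻¹ ^ (K + 1) * v ^ 2 ≤ u * v := by
    have h : B⁻¹ ^ (K + 1) * v ≤ u := by
      calc B⁻¹ ^ (K + 1) * v ≤ B⁻¹ ^ (K + 1) * (B ^ (K + 1) * u) := by gcongr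
        _ = u := by
          rw [← mul_assoc, ← mul_pow, ENNReal.inv_mul_cancel hB₀ hB_top, one_pow, one_mul]
    calc B⁻¹ ^ (K + 1) * v ^ 2 = B⁻¹ ^ (K + 1) * v * v := by ring
      _ ≤ u * v := by gcongr
  calc ∑' k, B ^ k * b k
      ≤ c ^ (1 / 2 : ℝ) * (B ^ K * S ^ (1 / 2 : ℝ) + B⁻¹ ^ (K + 1) * T ^ (1 / 2 : ℝ)) :=
        tsum_pow_mul_le_head_add_tail hB₀ hB_top b K
    _ = c ^ (1 / 2 : ℝ) * (B ^ K * u ^ 2 + B⁻¹ ^ (K + 1) * v ^ 2) := by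
        rw [rpow_one_fourth_sq, rpow_one_fourth_sq]
    _ ≤ c ^ (1 / 2 : ℝ) * (u * v + u * v) := by gcongr
    _ = 2 * c ^ (1 / 2 : ℝ) * u * v := by ring

end

/-- the appendix inequality, (5.1) of the paper. With `A = 2^{d/2}`,
for every sequence `(a_k)_{k ≥ 0}` of nonnegative reals,
`Σ_k A^k a_k ≤ C (Σ_k a_k²)^{1/4} (Σ_k A^{4k} a_k²)^{1/4}`. The sums are interpreted in
`ℝ≥0∞`, so the inequality is trivially true if either sum on the right diverges. -/
theorem statement13 (d : ℕ) (hd : 1 ≤ d) :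
    ∃ C : ℝ, 0 < C ∧ ∀ a : ℕ → ℝ, (∀ k, 0 ≤ a k) →
      (∑' k : ℕ, ENNReal.ofReal (((2 : ℝ) ^ ((d : ℝ) / 2)) ^ k * a k)) ≤
        ENNReal.ofReal C *
          (∑' k : ℕ, ENNReal.ofReal (a k ^ 2)) ^ (1 / 4 : ℝ) *
          (∑' k : ℕ, ENNReal.ofReal (((2 : ℝ) ^ ((d : ℝ) / 2)) ^ (4 * k) * a k ^ 2)) ^
            (1 / 4 : ℝ) := by
  set A : ℝ := (2 : ℝ) ^ ((d : ℝ) / 2)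
  have hA : 1 < A := Real.one_lt_rpow one_lt_two (div_pos (Nat.cast_pos.2 hd) two_pos)
  set B := ENNReal.ofReal A
  have hB : 1 < B := ENNReal.one_lt_ofReal.2 hA
  set C : ℝ≥0∞ := 2 * (1 - B⁻¹ ^ 2)⁻¹ ^ (1 / 2 : ℝ)
  have hC₀ : C ≠ 0 := mul_ne_zero two_ne_zero
    (rpow_pos_of_nonneg (ENNReal.inv_pos.2 (sub_ne_top one_ne_top)) (by norm_num)).ne'
  have hC_top : C ≠ ⊤ := mul_ne_top ofNat_ne_top
    (rpow_ne_top_of_nonneg (by norm_num) (inv_one_sub_inv_sq_ne_top hB))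
  refine ⟨C.toReal, ENNReal.toReal_pos hC₀ hC_top, fun a ha => ?_⟩
  have hpow : ∀ n, ENNReal.ofReal (A ^ n) = B ^ n := fun n => ENNReal.ofReal_pow (by positivity) n
  have hsq : ∀ k, ENNReal.ofReal (a k ^ 2) = ENNReal.ofReal (a k) ^ 2 :=
    fun k => ENNReal.ofReal_pow (ha k) 2
  have hlhs : ∀ k, ENNReal.ofReal (A ^ k * a k) = B ^ k * ENNReal.ofReal (a k) := fun k => by
    rw [ENNReal.ofReal_mul (by positivity), hpow]
  have hrhs : ∀ k, ENNReal.ofReal (A ^ (4 * k) * a k ^ 2) =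
      (B ^ (2 * k) * ENNReal.ofReal (a k)) ^ 2 := fun k => by
    rw [ENNReal.ofReal_mul (by positivity), hpow, hsq, mul_pow, ← pow_mul]
    ring
  simp only [hlhs, hsq, hrhs, ENNReal.ofReal_toReal hC_top]
  exact tsum_pow_mul_le hB ENNReal.ofReal_ne_top _
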